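/- Let m, n ≥ 1 and let M ∈ ℂ^{m×n} admit a singular value decomposition M = U D Vᴴ, where U ∈ ℂ^{m×m} and V ∈ ℂ^{n×n} are unitary, D ∈ ℝ^{m×n} satisfies D_{ij} = σ_i if i = j and D_{ij} = 0 otherwise, and σ_1 ≥ σ_2 ≥ ⋯ ≥ σ_{min(m,n)} ≥ 0. Let 0 ≤ k ≤ min(m,n). Then for every matrix B ∈ ℂ^{m×n} with rank(B) ≤ k, ‖M − B‖_F² ≥ Σ_{i=k+1}^{min(m,n)} σ_i². In particular, the rank-k truncated SVD M̃ = U D̃ Vᴴ, where D̃ keeps only σ_1,…,σ_k and zeroes the remaining singular values, is a closest rank-k matrix to M in the Frobenius norm. -/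

import Mathlib

/-!
By unitary invariance of the Frobenius norm we may take `M = D` diagonal. If `rank C ≤ k`, the
columns of `C` lie in a subspace `S` with `dim S ≤ k`, so column `j` of `D - C` is at least as
long as the component of `σ_j e_j` orthogonal to `S`, whose squared length is `σ_j² (1 - w_j)`
with `w_j = ‖P_S e_j‖²`. The weights satisfy `0 ≤ w_j ≤ 1` and `∑ w_j = dim S ≤ k`; as `σ` is
decreasing, `∑ σ_j² (1 - w_j)` is smallest when all the weight sits on the first `k` indices,
where it equals `∑_{j ≥ k} σ_j²`. The truncated SVD attains this bound.
-/

open Matrix BigOperators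

/-- The Frobenius norm of a complex matrix: `‖M‖_F = sqrt (Σ_{i,j} |M_{ij}|²)`. -/
noncomputable def frobNorm {m n : Type*} [Fintype m] [Fintype n]
    (M : Matrix m n ℂ) : ℝ :=
  Real.sqrt (∑ i, ∑ j, ‖M i j‖ ^ 2)

open Finset Module WithLp

theorem sum_Ico_le_sum_range_mul_one_sub {a w : ℕ → ℝ} {k μ : ℕ} (hkμ : k ≤ μ)
    (ha : ∀ i j, i ≤ j → j < μ → a j ≤ a i) (ha₀ : ∀ i < μ, 0 ≤ a i)
    (hw₀ : ∀ i < μ, 0 ≤ w i) (hw₁ : ∀ i < μ, w i ≤ 1) (hw : ∑ i ∈ range μ, w i ≤ k) :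
    ∑ i ∈ Ico k μ, a i ≤ ∑ i ∈ range μ, a i * (1 - w i) := by
  -- with `t` between the first `k` values of `a` and the rest, `∑ (a i - t) w i ≤ ∑_{i<k} (a i - t)`
  obtain ⟨t, ht₀, hlo, hhi⟩ : ∃ t, 0 ≤ t ∧ (∀ i < k, t ≤ a i) ∧ ∀ i ∈ Ico k μ, a i ≤ t := by
    rcases hkμ.lt_or_eq with hk | rfl
    · exact ⟨a k, ha₀ k hk, fun i hi => ha i k hi.le hk,
        fun i hi => ha k i (mem_Ico.1 hi).1 (mem_Ico.1 hi).2⟩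
    · exact ⟨0, le_rfl, ha₀, by simp⟩
  have head : ∑ i ∈ range k, (a i - t) * w i ≤ ∑ i ∈ range k, (a i - t) :=
    sum_le_sum fun i hi => mul_le_of_le_one_right (sub_nonneg.2 (hlo i (mem_range.1 hi)))
      (hw₁ i (by have := mem_range.1 hi; omega))
  have tail : ∑ i ∈ Ico k μ, (a i - t) * w i ≤ 0 :=
    sum_nonpos fun i hi => mul_nonpos_of_nonpos_of_nonneg (sub_nonpos.2 (hhi i hi))
      (hw₀ i (mem_Ico.1 hi).2)
  have split_w := sum_range_add_sum_Ico (fun i => (a i - t) * w i) hkμ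
  have split_a := sum_range_add_sum_Ico a hkμ
  have e₁ : ∑ i ∈ range μ, (a i - t) * w i = ∑ i ∈ range μ, a i * w i - t * ∑ i ∈ range μ, w i := by
    simp only [sub_mul, sum_sub_distrib, mul_sum]
  have e₂ : ∑ i ∈ range k, (a i - t) = ∑ i ∈ range k, a i - k * t := by
    simp [sum_sub_distrib]
  have e₃ : ∑ i ∈ range μ, a i * (1 - w i) = ∑ i ∈ range μ, a i - ∑ i ∈ range μ, a i * w i := by
    simp only [mul_sub, mul_one, sum_sub_distrib]
  have hwt := mul_le_mul_of_nonneg_left hw ht₀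
  linarith

section Projection

variable {𝕜 E : Type*} [RCLike 𝕜] [NormedAddCommGroup E] [InnerProductSpace 𝕜 E]

theorem Submodule.norm_sub_starProjection_le (S : Submodule 𝕜 E) [S.HasOrthogonalProjection]
    (y : E) {c : E} (hc : c ∈ S) : ‖y - S.starProjection y‖ ≤ ‖y - c‖ := by
  rw [S.starProjection_minimal]
  exact ciInf_le ⟨0, Set.forall_mem_range.2 fun _ => norm_nonneg _⟩ (⟨c, hc⟩ : S)

theorem Submodule.norm_sub_starProjection_sq (S : Submodule 𝕜 E) [S.HasOrthogonalProjection]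
    (y : E) : ‖y - S.starProjection y‖ ^ 2 = ‖y‖ ^ 2 - ‖S.starProjection y‖ ^ 2 := by
  rw [S.norm_sq_eq_add_norm_sq_starProjection y, S.starProjection_orthogonal_val]
  ring

theorem Submodule.sum_norm_sq_starProjection_eq_finrank [FiniteDimensional 𝕜 E]
    (S : Submodule 𝕜 E) {ι : Type*} [Fintype ι] (e : OrthonormalBasis ι 𝕜 E) :
    ∑ i, ‖S.starProjection (e i)‖ ^ 2 = finrank 𝕜 S := by
  let b := stdOrthonormalBasis 𝕜 S
  have parseval : ∀ x, ‖S.starProjection x‖ ^ 2 = ∑ l, ‖inner 𝕜 (b l : E) x‖ ^ 2 := fun x => by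
    rw [S.starProjection_apply, Submodule.norm_coe, ← b.sum_sq_norm_inner_right]
    simp only [Submodule.inner_orthogonalProjectionOnto_eq_of_mem_left]
  simp_rw [parseval]
  rw [sum_comm]
  simp [e.sum_sq_norm_inner_left, Submodule.norm_coe, b.orthonormal.1 _]

end Projection

section Frobenius

variable {α β : Type*} [Fintype β]

theorem finrank_span_toLp_col (C : Matrix α β ℂ) :
    finrank ℂ (Submodule.span ℂ (Set.range fun j => toLp 2 (C.col j))) = C.rank := by
  rw [Matrix.rank_eq_finrank_span_cols, Set.range_comp' (toLp 2) C.col,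
    ← (WithLp.linearEquiv 2 ℂ (α → ℂ)).symm.finrank_map_eq, ← Submodule.span_image]
  rfl

variable [Fintype α]

theorem frobNorm_nonneg (A : Matrix α β ℂ) : 0 ≤ frobNorm A := Real.sqrt_nonneg _

theorem frobNorm_sq (A : Matrix α β ℂ) : frobNorm A ^ 2 = ∑ i, ∑ j, ‖A i j‖ ^ 2 :=
  Real.sq_sqrt (by positivity)

theorem frobNorm_sq_eq_sum_norm_sq_col (A : Matrix α β ℂ) :
    frobNorm A ^ 2 = ∑ j, ‖toLp 2 (A.col j)‖ ^ 2 := by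
  rw [frobNorm_sq, sum_comm]
  simp [EuclideanSpace.norm_sq_eq]

theorem frobNorm_sq_eq_re_trace (A : Matrix α β ℂ) : frobNorm A ^ 2 = (Aᴴ * A).trace.re := by
  simp only [frobNorm_sq, Matrix.trace, Matrix.diag, Matrix.mul_apply, Matrix.conjTranspose_apply,
    Complex.re_sum]
  rw [sum_comm]
  refine sum_congr rfl fun i _ => sum_congr rfl fun j _ => ?_
  rw [mul_comm, RCLike.star_def, Complex.mul_conj, Complex.normSq_eq_norm_sq]
  norm_cast

theorem frobNorm_mul_mul_conjTranspose [DecidableEq α] [DecidableEq β] {U : Matrix α α ℂ}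
    {V : Matrix β β ℂ} (hU : Uᴴ * U = 1) (hV : Vᴴ * V = 1) (X : Matrix α β ℂ) :
    frobNorm (U * X * Vᴴ) = frobNorm X := by
  refine (pow_left_inj₀ (frobNorm_nonneg _) (frobNorm_nonneg _) two_ne_zero).1 ?_
  have hgram : (U * X * Vᴴ)ᴴ * (U * X * Vᴴ) = V * (Xᴴ * X) * Vᴴ := by
    simp only [Matrix.conjTranspose_mul, Matrix.conjTranspose_conjTranspose, Matrix.mul_assoc]
    rw [← Matrix.mul_assoc Uᴴ U, hU, Matrix.one_mul]
  rw [frobNorm_sq_eq_re_trace, frobNorm_sq_eq_re_trace, hgram, Matrix.trace_mul_cycle,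
    ← Matrix.mul_assoc, hV, Matrix.one_mul]

theorem frobNorm_mul_mul_conjTranspose_sub [DecidableEq α] [DecidableEq β] {U : Matrix α α ℂ}
    {V : Matrix β β ℂ} (hU : Uᴴ * U = 1) (hV : Vᴴ * V = 1) (X B : Matrix α β ℂ) :
    frobNorm (U * X * Vᴴ - B) = frobNorm (X - Uᴴ * B * V) := by
  have hB : U * (Uᴴ * B * V) * Vᴴ = B := by
    simp only [← Matrix.mul_assoc, mul_eq_one_comm.mp hU, Matrix.one_mul]
    rw [Matrix.mul_assoc, mul_eq_one_comm.mp hV, Matrix.mul_one]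
  rw [← frobNorm_mul_mul_conjTranspose hU hV (X - _), Matrix.mul_sub, Matrix.sub_mul, hB]

theorem sum_norm_sq_col_sub_starProjection_le (A C : Matrix α β ℂ)
    (S : Submodule ℂ (EuclideanSpace ℂ α)) [S.HasOrthogonalProjection]
    (hC : ∀ j, toLp 2 (C.col j) ∈ S) :
    ∑ j, ‖toLp 2 (A.col j) - S.starProjection (toLp 2 (A.col j))‖ ^ 2 ≤ frobNorm (A - C) ^ 2 := by
  rw [frobNorm_sq_eq_sum_norm_sq_col]
  refine sum_le_sum fun j _ => pow_le_pow_left₀ (norm_nonneg _) ?_ 2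
  have hcol : toLp 2 ((A - C).col j) = toLp 2 (A.col j) - toLp 2 (C.col j) := rfl
  rw [hcol]
  exact S.norm_sub_starProjection_le _ (hC j)

end Frobenius

def rectDiag (m n : ℕ) (τ : ℕ → ℝ) : Matrix (Fin m) (Fin n) ℂ :=
  Matrix.of fun i j => if (i : ℕ) = j then ((τ i : ℝ) : ℂ) else 0

section RectDiag

variable {m n : ℕ}

theorem rectDiag_col_of_lt (τ : ℕ → ℝ) (j : Fin n) (hj : (j : ℕ) < m) :
    toLp 2 ((rectDiag m n τ).col j) =
      (τ j : ℂ) • EuclideanSpace.single (⟨j, hj⟩ : Fin m) 1 := by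
  ext i
  by_cases h : (i : ℕ) = j <;> simp [rectDiag, Fin.ext_iff, h]

theorem rectDiag_col_of_le (τ : ℕ → ℝ) (j : Fin n) (hj : m ≤ j) :
    toLp 2 ((rectDiag m n τ).col j) = 0 := by
  ext i
  have : (i : ℕ) ≠ j := by omega
  simp [rectDiag, this]

theorem sum_rectDiag_col (τ : ℕ → ℝ) {F : EuclideanSpace ℂ (Fin m) → ℝ} (hF : F 0 = 0)
    {f : ℕ → ℝ} (hf : ∀ i (hi : i < m), F ((τ i : ℂ) • EuclideanSpace.single ⟨i, hi⟩ 1) = f i) :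
    ∑ j : Fin n, F (toLp 2 ((rectDiag m n τ).col j)) = ∑ i ∈ range (min m n), f i := by
  calc ∑ j : Fin n, F (toLp 2 ((rectDiag m n τ).col j))
        = ∑ j : Fin n, if (j : ℕ) < m then f j else 0 :=
        sum_congr rfl fun j _ => by
          split_ifs with hj
          · rw [rectDiag_col_of_lt τ j hj, hf]
          · rw [rectDiag_col_of_le τ j (not_lt.1 hj), hF]
    _ = ∑ i ∈ range n, if i < m then f i else 0 :=
        Fin.sum_univ_eq_sum_range (fun i => if i < m then f i else 0) n
    _ = ∑ i ∈ range (min m n), f i := by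
        rw [← sum_filter]
        congr 1
        ext i
        simp only [mem_filter, mem_range]
        omega

theorem frobNorm_sq_rectDiag (τ : ℕ → ℝ) :
    frobNorm (rectDiag m n τ) ^ 2 = ∑ i ∈ range (min m n), τ i ^ 2 := by
  rw [frobNorm_sq_eq_sum_norm_sq_col]
  exact sum_rectDiag_col τ (F := fun x => ‖x‖ ^ 2) (by simp) fun i hi => by
    simp [norm_smul]

theorem sum_Ico_sq_le_frobNorm_rectDiag_sub_sq {σ : ℕ → ℝ} {k : ℕ}
    (hσ : ∀ i j, i ≤ j → j < min m n → σ j ≤ σ i) (hσ₀ : ∀ i < min m n, 0 ≤ σ i)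
    (hk : k ≤ min m n) {C : Matrix (Fin m) (Fin n) ℂ} (hC : C.rank ≤ k) :
    ∑ i ∈ Ico k (min m n), σ i ^ 2 ≤ frobNorm (rectDiag m n σ - C) ^ 2 := by
  set S := Submodule.span ℂ (Set.range fun j => toLp 2 (C.col j))
  let w : ℕ → ℝ := fun i =>
    if hi : i < m then ‖S.starProjection (EuclideanSpace.single ⟨i, hi⟩ 1)‖ ^ 2 else 0
  have hw₀ : ∀ i, 0 ≤ w i := fun i => by
    unfold w
    split_ifs <;> positivity
  have hw₁ : ∀ i, w i ≤ 1 := fun i => by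
    unfold w
    split_ifs
    · exact pow_le_one₀ (norm_nonneg _) <|
        (S.norm_starProjection_apply_le _).trans (by simp)
    · exact zero_le_one
  have hw : ∑ i ∈ range (min m n), w i ≤ k :=
    calc ∑ i ∈ range (min m n), w i ≤ ∑ i ∈ range m, w i :=
          sum_le_sum_of_subset_of_nonneg (range_subset_range.2 (min_le_left m n))
            fun i _ _ => hw₀ i
      _ = ∑ i : Fin m, ‖S.starProjection (EuclideanSpace.basisFun (Fin m) ℂ i)‖ ^ 2 := by
          rw [← Fin.sum_univ_eq_sum_range]
          simp [w, EuclideanSpace.basisFun_apply]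
      _ = C.rank := by
          rw [S.sum_norm_sq_starProjection_eq_finrank, finrank_span_toLp_col]
      _ ≤ k := by exact_mod_cast hC
  calc ∑ i ∈ Ico k (min m n), σ i ^ 2
      ≤ ∑ i ∈ range (min m n), σ i ^ 2 * (1 - w i) :=
        sum_Ico_le_sum_range_mul_one_sub hk
          (fun i j hij hj => pow_le_pow_left₀ (hσ₀ j hj) (hσ i j hij hj) 2)
          (fun i _ => sq_nonneg _) (fun i _ => hw₀ i) (fun i _ => hw₁ i) hw
    _ = ∑ j, ‖toLp 2 ((rectDiag m n σ).col j) -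
          S.starProjection (toLp 2 ((rectDiag m n σ).col j))‖ ^ 2 :=
        (sum_rectDiag_col σ (F := fun x => ‖x - S.starProjection x‖ ^ 2) (by simp)
          fun i hi => by
            simp only [map_smul, ← smul_sub, norm_smul, mul_pow, S.norm_sub_starProjection_sq,
              PiLp.norm_single, norm_one, one_pow, Complex.norm_real, Real.norm_eq_abs,
              sq_abs, w, dif_pos hi]).symm
    _ ≤ frobNorm (rectDiag m n σ - C) ^ 2 :=
        sum_norm_sq_col_sub_starProjection_le _ _ S fun j => Submodule.subset_span ⟨j, rfl⟩

theorem frobNorm_sq_rectDiag_sub_truncation {σ : ℕ → ℝ} {k : ℕ} (hk : k ≤ min m n) :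
    frobNorm (rectDiag m n σ - Matrix.of fun (i : Fin m) (j : Fin n) =>
        if (i : ℕ) = j ∧ (i : ℕ) < k then ((σ i : ℝ) : ℂ) else 0) ^ 2 =
      ∑ i ∈ Ico k (min m n), σ i ^ 2 := by
  have htail : (rectDiag m n σ - Matrix.of fun (i : Fin m) (j : Fin n) =>
      if (i : ℕ) = j ∧ (i : ℕ) < k then ((σ i : ℝ) : ℂ) else 0) =
      rectDiag m n (fun i => if i < k then 0 else σ i) := by
    ext i j
    by_cases hij : (i : ℕ) = j <;> by_cases hjk : (j : ℕ) < k <;> simp [rectDiag, hij, hjk]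
  rw [htail, frobNorm_sq_rectDiag, ← sum_range_add_sum_Ico _ hk,
    sum_eq_zero fun i hi => by simp [mem_range.1 hi], zero_add]
  exact sum_congr rfl fun i hi => by simp [not_lt.2 (mem_Ico.1 hi).1]

end RectDiag

theorem eckart_young_frobenius_general
    (m n : ℕ)
    (M : Matrix (Fin m) (Fin n) ℂ)
    (U : Matrix (Fin m) (Fin m) ℂ) (V : Matrix (Fin n) (Fin n) ℂ)
    (hU : Uᴴ * U = 1) (hV : Vᴴ * V = 1)
    (σ : ℕ → ℝ)
    (hσ_sorted : ∀ i j : ℕ, i ≤ j → j < min m n → σ j ≤ σ i)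
    (hσ_nonneg : ∀ i : ℕ, i < min m n → 0 ≤ σ i)
    (hM : M = U * Matrix.of (fun (i : Fin m) (j : Fin n) =>
        if (i : ℕ) = (j : ℕ) then ((σ (i : ℕ) : ℝ) : ℂ) else 0) * Vᴴ)
    (k : ℕ) (hk : k ≤ min m n) :
    (∀ B : Matrix (Fin m) (Fin n) ℂ, B.rank ≤ k →
        ∑ i ∈ Finset.Ico k (min m n), σ i ^ 2 ≤ frobNorm (M - B) ^ 2) ∧
    (∀ B : Matrix (Fin m) (Fin n) ℂ, B.rank ≤ k →
        frobNorm (M - U * Matrix.of (fun (i : Fin m) (j : Fin n) =>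
            if (i : ℕ) = (j : ℕ) ∧ (i : ℕ) < k then ((σ (i : ℕ) : ℝ) : ℂ) else 0) * Vᴴ)
          ≤ frobNorm (M - B)) := by
  replace hM : M = U * rectDiag m n σ * Vᴴ := hM
  have lower : ∀ B : Matrix (Fin m) (Fin n) ℂ, B.rank ≤ k →
      ∑ i ∈ Ico k (min m n), σ i ^ 2 ≤ frobNorm (M - B) ^ 2 := fun B hB => by
    rw [hM, frobNorm_mul_mul_conjTranspose_sub hU hV]
    exact sum_Ico_sq_le_frobNorm_rectDiag_sub_sq hσ_sorted hσ_nonneg hk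
      (((Uᴴ * B).rank_mul_le_left V).trans ((Uᴴ.rank_mul_le_right B).trans hB))
  refine ⟨lower, fun B hB => ?_⟩
  rw [← pow_le_pow_iff_left₀ (frobNorm_nonneg _) (frobNorm_nonneg _) two_ne_zero]
  calc _ = frobNorm (U * (rectDiag m n σ - Matrix.of fun (i : Fin m) (j : Fin n) =>
          if (i : ℕ) = j ∧ (i : ℕ) < k then ((σ i : ℝ) : ℂ) else 0) * Vᴴ) ^ 2 := by
        rw [hM, Matrix.mul_sub, Matrix.sub_mul]
    _ = ∑ i ∈ Ico k (min m n), σ i ^ 2 := by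
        rw [frobNorm_mul_mul_conjTranspose hU hV, frobNorm_sq_rectDiag_sub_truncation hk]
    _ ≤ frobNorm (M - B) ^ 2 := lower B hB

/-- **Eckart–Young theorem (Frobenius norm).** Let `M = U D Vᴴ` be a singular value
decomposition with `U, V` unitary, `D_{ij} = σ_i` if `i = j` and `0` otherwise, and
`σ_0 ≥ σ_1 ≥ ⋯ ≥ σ_{min(m,n)−1} ≥ 0` (0-indexed). Then every matrix `B` of rank at
most `k` satisfies `‖M − B‖_F² ≥ Σ_{i ≥ k} σ_i²`; in particular the rank-`k`
truncated SVD `M̃ = U D̃ Vᴴ` is a closest rank-`k` matrix to `M` in the Frobenius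
norm. -/
theorem eckart_young_frobenius
    (m n : ℕ) (hm : 1 ≤ m) (hn : 1 ≤ n)
    (M : Matrix (Fin m) (Fin n) ℂ)
    (U : Matrix (Fin m) (Fin m) ℂ) (V : Matrix (Fin n) (Fin n) ℂ)
    (hU : Uᴴ * U = 1) (hV : Vᴴ * V = 1)
    (σ : ℕ → ℝ)
    (hσ_sorted : ∀ i j : ℕ, i ≤ j → j < min m n → σ j ≤ σ i)
    (hσ_nonneg : ∀ i : ℕ, i < min m n → 0 ≤ σ i)
    (hM : M = U * Matrix.of (fun (i : Fin m) (j : Fin n) =>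
        if (i : ℕ) = (j : ℕ) then ((σ (i : ℕ) : ℝ) : ℂ) else 0) * Vᴴ)
    (k : ℕ) (hk : k ≤ min m n) :
    (∀ B : Matrix (Fin m) (Fin n) ℂ, B.rank ≤ k →
        ∑ i ∈ Finset.Ico k (min m n), σ i ^ 2 ≤ frobNorm (M - B) ^ 2) ∧
    (∀ B : Matrix (Fin m) (Fin n) ℂ, B.rank ≤ k →
        frobNorm (M - U * Matrix.of (fun (i : Fin m) (j : Fin n) =>
            if (i : ℕ) = (j : ℕ) ∧ (i : ℕ) < k then ((σ (i : ℕ) : ℝ) : ℂ) else 0) * Vᴴ)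
          ≤ frobNorm (M - B)) :=
  eckart_young_frobenius_general m n M U V hU hV σ hσ_sorted hσ_nonneg hM k hk
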